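/- Replacing the key of an internal BST node n (that has two nonempty children) by the key of its in-tree successor, and then deleting the successor node from the right subtree, yields a binary search tree whose key set equals the original key set with n's key removed. -/

import Mathlib

/-!
A BST's leftmost key `s` is its minimum, and `delMin` removes exactly that node, so the keys of
`delMin r` are those of `r` other than `s`, all strictly above `s`. As `s` lies in the right subtree
of the root key `k`, we have `k < s`; hence `s` can replace `k` at the root, with `l` below it and
`delMin r` above it, and the key set loses exactly `k`.
-/

namespace PathCAS

inductive Tree (α : Type*) where
  | leaf : Tree α
  | node : Tree α → α → Tree α → Tree α

namespace Tree

variable {α : Type*} [LinearOrder α]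

/-- The set of keys of a tree. -/
def Keys : Tree α → Set α
  | .leaf => ∅
  | .node l k r => Keys l ∪ {k} ∪ Keys r

/-- The binary-search-tree ordering invariant. -/
def IsBST : Tree α → Prop
  | .leaf => True
  | .node l k r => (∀ x ∈ Keys l, x < k) ∧ (∀ x ∈ Keys r, k < x) ∧ IsBST l ∧ IsBST r

end Tree

end PathCAS

namespace PathCAS.Tree

variable {α : Type*} [LinearOrder α]

/-- The key of the leftmost node of a tree, if the tree is nonempty. -/
def leftmostKey : Tree α → Option α
  | .leaf => none
  | .node l k _ => some ((leftmostKey l).getD k)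

/-- Delete the leftmost node of a tree (the leftmost node has no left child, so it is
replaced by its right subtree). -/
def delMin : Tree α → Tree α
  | .leaf => .leaf
  | .node .leaf _ r => r
  | .node (.node a b c) k r => .node (delMin (.node a b c)) k r

end PathCAS.Tree

namespace PathCAS.Tree

variable {α : Type*}

theorem keys_node (l r : Tree α) (k : α) : (node l k r).Keys = l.Keys ∪ {k} ∪ r.Keys := rfl

theorem leftmostKey_node_leaf (r : Tree α) (k : α) : leftmostKey (node leaf k r) = some k := rfl

theorem leftmostKey_node_node (a c r : Tree α) (b k : α) :
    leftmostKey (node (node a b c) k r) = leftmostKey (node a b c) := rfl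

theorem insert_keys_delMin {t : Tree α} {s : α} (h : leftmostKey t = some s) :
    insert s t.delMin.Keys = t.Keys := by
  induction t generalizing s with
  | leaf => cases h
  | node l k r ihl =>
    cases l with
    | leaf =>
      rw [leftmostKey_node_leaf, Option.some_inj] at h
      subst h
      simp [delMin, Keys]
    | node a b c =>
      rw [leftmostKey_node_node] at h
      rw [delMin, keys_node, keys_node _ r, ← ihl h, Set.insert_union, Set.insert_union]

theorem mem_keys_of_leftmostKey_eq_some {t : Tree α} {s : α} (h : leftmostKey t = some s) :
    s ∈ t.Keys :=
  insert_keys_delMin h ▸ Set.mem_insert s _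

theorem keys_delMin_subset : ∀ t : Tree α, t.delMin.Keys ⊆ t.Keys
  | .leaf => subset_rfl
  | .node _ _ _ => insert_keys_delMin (leftmostKey.eq_2 _ _ _) ▸ Set.subset_insert _ _

variable [LinearOrder α]

theorem IsBST.delMin {t : Tree α} (ht : t.IsBST) : t.delMin.IsBST := by
  induction t with
  | leaf => trivial
  | node l k r ihl =>
    obtain ⟨hlk, hkr, hl, hr⟩ := ht
    cases l with
    | leaf => exact hr
    | node a b c =>
      exact ⟨fun x hx => hlk x (keys_delMin_subset _ hx), hkr, ihl hl, hr⟩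

theorem IsBST.leftmostKey_lt_of_mem_keys_delMin {t : Tree α} {s x : α} (ht : t.IsBST)
    (hs : leftmostKey t = some s) (hx : x ∈ t.delMin.Keys) : s < x := by
  induction t generalizing s with
  | leaf => cases hs
  | node l k r ihl =>
    obtain ⟨hlk, hkr, hl, -⟩ := ht
    cases l with
    | leaf =>
      rw [leftmostKey_node_leaf, Option.some_inj] at hs
      exact hs ▸ hkr x hx
    | node a b c =>
      rw [leftmostKey_node_node] at hs
      have hsk : s < k := hlk s (mem_keys_of_leftmostKey_eq_some hs)
      rw [Tree.delMin, keys_node] at hx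
      rcases hx with (hx | rfl) | hx
      · exact ihl hl hs hx
      · exact hsk
      · exact hsk.trans (hkr x hx)

end PathCAS.Tree

open PathCAS PathCAS.Tree

theorem two_child_delete_correct_general {α : Type*} [LinearOrder α]
    (l r : PathCAS.Tree α) (k s : α)
    (hbst : (PathCAS.Tree.node l k r).IsBST)
    (hs : leftmostKey r = some s) :
    (PathCAS.Tree.node l s (delMin r)).IsBST ∧
    (PathCAS.Tree.node l s (delMin r)).Keys =
      (PathCAS.Tree.node l k r).Keys \ {k} := by
  obtain ⟨hlk, hkr, hl, hr⟩ := hbst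
  have hks : k < s := hkr s (mem_keys_of_leftmostKey_eq_some hs)
  refine ⟨⟨fun x hx => (hlk x hx).trans hks,
    fun x hx => hr.leftmostKey_lt_of_mem_keys_delMin hs hx, hl, hr.delMin⟩, ?_⟩
  have hk_l : k ∉ l.Keys := fun h => (hlk k h).false
  have hk_r : k ∉ r.Keys := fun h => (hkr k h).false
  rw [keys_node, keys_node, Set.union_sdiff_distrib, Set.union_sdiff_distrib, Set.sdiff_self,
    Set.sdiff_singleton_eq_self hk_l, Set.sdiff_singleton_eq_self hk_r, ← insert_keys_delMin hs,
    Set.union_empty, Set.union_singleton, Set.union_insert, Set.insert_union]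

/-- Two-child deletion: replacing the key of a node having two nonempty children by
its in-tree successor (the minimum key of its right subtree) and deleting the
successor node from the right subtree yields a BST whose key set is the original key
set with the node's key removed. -/
theorem two_child_delete_correct {α : Type*} [LinearOrder α]
    (l r : PathCAS.Tree α) (k s : α)
    (hl : l ≠ .leaf) (hr : r ≠ .leaf)
    (hbst : (PathCAS.Tree.node l k r).IsBST)
    (hs : leftmostKey r = some s) :
    (PathCAS.Tree.node l s (delMin r)).IsBST ∧
    (PathCAS.Tree.node l s (delMin r)).Keys =
      (PathCAS.Tree.node l k r).Keys \ {k} :=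
  two_child_delete_correct_general l r k s hbst hs
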